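/- arXiv:math/0407229 — 2 statements merged into one kernel-verified Lean document; each statement's English description precedes it below -/
import Mathlib

section
/- For a tube t of a graph Γ and a subset t' of the vertices of Γ disjoint from t: t' induces a connected subgraph of the reconnected complement Γ*_t if and only if t' or t' ∪ t induces a connected subgraph of Γ. -/
open Finset

variable {V : Type*}

/-- `s` is a tube of the graph `G` restricted to the vertex set `U`:
a nonempty proper subset of `U` inducing a connected subgraph. -/
def IsTubeOn [DecidableEq V] (G : SimpleGraph V) (U s : Finset V) : Prop :=
  s ⊆ U ∧ s.Nonempty ∧ s ≠ U ∧ (G.induce (s : Set V)).Connected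

/-- Two tubes intersect: they overlap and neither contains the other. -/
def TubesIntersect [DecidableEq V] (t1 t2 : Finset V) : Prop :=
  (t1 ∩ t2).Nonempty ∧ ¬ t1 ⊆ t2 ∧ ¬ t2 ⊆ t1

/-- Two tubes are adjacent: disjoint and their union is again a tube. -/
def TubesAdjacent [DecidableEq V] (G : SimpleGraph V) (U t1 t2 : Finset V) : Prop :=
  t1 ∩ t2 = ∅ ∧ IsTubeOn G U (t1 ∪ t2)

/-- Compatibility of tubes: neither intersecting nor adjacent. -/
def CompatibleOn [DecidableEq V] (G : SimpleGraph V) (U t1 t2 : Finset V) : Prop :=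
  ¬ TubesIntersect t1 t2 ∧ ¬ TubesAdjacent G U t1 t2

/-- A tubing: a set of pairwise compatible tubes. -/
def IsTubingOn [DecidableEq V] (G : SimpleGraph V) (U : Finset V)
    (T : Finset (Finset V)) : Prop :=
  (∀ s ∈ T, IsTubeOn G U s) ∧
    ∀ s1 ∈ T, ∀ s2 ∈ T, s1 ≠ s2 → CompatibleOn G U s1 s2

/-- The reconnected complement `Γ*_t`, realized as a graph on the same vertex
set whose edges only join vertices outside `t`: `a,b ∉ t` are adjacent iff
`{a,b}` or `{a,b} ∪ t` induces a connected subgraph of `G`. -/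
def recon [DecidableEq V] (G : SimpleGraph V) (t : Finset V) : SimpleGraph V where
  Adj a b := a ≠ b ∧ a ∉ t ∧ b ∉ t ∧
    ((G.induce ({a, b} : Set V)).Connected ∨
      (G.induce (({a, b} : Set V) ∪ (t : Set V))).Connected)
  symm := by
    constructor
    rintro a b ⟨hab, ha, hb, h⟩
    exact ⟨hab.symm, hb, ha, by rwa [Set.pair_comm b a]⟩
  loopless := by constructor; rintro a ⟨h, -⟩; exact h rfl

/-- The map `ρ` from tubes of the reconnected complement to tubes of `G`. -/
noncomputable def rho [DecidableEq V] (G : SimpleGraph V) (t t' : Finset V) :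
    Finset V :=
  letI := Classical.dec ((G.induce ((t' ∪ t : Finset V) : Set V)).Connected)
  if (G.induce ((t' ∪ t : Finset V) : Set V)).Connected then t' ∪ t else t'

section helpers

open SimpleGraph

/-- A walk between distinct vertices has a first edge. -/
lemma exists_adj_of_walk {W : Type*} {H : SimpleGraph W} {x y : W}
    (w : H.Walk x y) (h : x ≠ y) : ∃ z, H.Adj x z := by
  cases w with
  | nil => exact absurd rfl h
  | cons h' _ => exact ⟨_, h'⟩

/-- If the graph induced on a pair is connected, the pair is an edge. -/
lemma adj_of_pair_conn (G : SimpleGraph V) {a b : V} (hab : a ≠ b)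
    (h : (G.induce ({a, b} : Set V)).Connected) : G.Adj a b := by
  have hr := h.preconnected ⟨a, by simp⟩ ⟨b, by simp⟩
  obtain ⟨w⟩ := hr
  obtain ⟨z, hz⟩ := exists_adj_of_walk w (by simp [Subtype.ext_iff, hab])
  have hza : G.Adj a z.val := hz
  have hzv : z.val = a ∨ z.val = b := by
    have := z.prop
    simp only [Set.mem_insert_iff, Set.mem_singleton_iff] at this
    exact this
  rcases hzv with h1 | h1
  · rw [h1] at hza; exact absurd hza (G.irrefl)
  · rwa [h1] at hza

/-- A walk from inside a set to outside it crosses the boundary. -/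
lemma escape_edge {W : Type*} {H : SimpleGraph W} (C : Set W) :
    ∀ {p q : W}, H.Walk p q → p ∈ C → q ∉ C →
      ∃ a b, a ∈ C ∧ b ∉ C ∧ H.Adj a b := by
  intro p q w
  induction w with
  | nil => intro hp hq; exact absurd hp hq
  | @cons u x v h w ih =>
    intro hp hq
    by_cases hx : x ∈ C
    · exact ih hx hq
    · exact ⟨u, x, hp, hx, h⟩

/-- Gluing two vertices attached to a connected set. -/
lemma att_conn (G : SimpleGraph V) (t : Finset V)
    (htc : (G.induce (t : Set V)).Connected) {a b c d : V}
    (hc : c ∈ t) (hd : d ∈ t) (hac : G.Adj a c) (hbd : G.Adj b d) :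
    (G.induce (({a, b} : Set V) ∪ (t : Set V))).Connected := by
  have hsa : (G.induce ({a} : Set V)).Connected := by
    rw [induce_singleton_eq_top]
    exact @connected_top _ ⟨⟨a, rfl⟩⟩
  have hsb : (G.induce ({b} : Set V)).Connected := by
    rw [induce_singleton_eq_top]
    exact @connected_top _ ⟨⟨b, rfl⟩⟩
  have h1 : (G.induce (({a} : Set V) ∪ (t : Set V))).Connected :=
    connected_induce_union hsa.preconnected htc.preconnected (Set.mem_singleton a) hc hac
  have h2 : (G.induce (({b} : Set V) ∪ (({a} : Set V) ∪ (t : Set V)))).Connected :=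
    connected_induce_union hsb.preconnected h1.preconnected (Set.mem_singleton b) (Or.inr hd) hbd
  have hset : (({a, b} : Set V) ∪ (t : Set V)) =
      (({b} : Set V) ∪ (({a} : Set V) ∪ (t : Set V))) := by
    ext x; simp; tauto
  rwa [hset]

variable [DecidableEq V]

/-- Reachability within `t'` in the reconnected complement. -/
def Rrel (G : SimpleGraph V) (t t' : Finset V) (a b : V) : Prop :=
  ∃ (ha : a ∈ (t' : Set V)) (hb : b ∈ (t' : Set V)),
    ((recon G t).induce (t' : Set V)).Reachable ⟨a, ha⟩ ⟨b, hb⟩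

lemma Rrel.refl {G : SimpleGraph V} {t t' : Finset V} {a : V}
    (ha : a ∈ t') : Rrel G t t' a a :=
  ⟨by simpa using ha, by simpa using ha, Reachable.refl _⟩

lemma Rrel.symm {G : SimpleGraph V} {t t' : Finset V} {a b : V}
    (h : Rrel G t t' a b) : Rrel G t t' b a := by
  obtain ⟨ha, hb, hr⟩ := h
  exact ⟨hb, ha, hr.symm⟩

lemma Rrel.trans {G : SimpleGraph V} {t t' : Finset V} {a b c : V}
    (h1 : Rrel G t t' a b) (h2 : Rrel G t t' b c) : Rrel G t t' a c := by
  obtain ⟨ha, hb, hr⟩ := h1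
  obtain ⟨hb', hc, hr'⟩ := h2
  exact ⟨ha, hc, hr.trans hr'⟩

lemma Rrel.of_adj {G : SimpleGraph V} {t t' : Finset V} {a b : V}
    (ha : a ∈ t') (hb : b ∈ t') (h : (recon G t).Adj a b) : Rrel G t t' a b :=
  ⟨by simpa using ha, by simpa using hb, Adj.reachable (by exact h)⟩

/-- A vertex attached to `t`. -/
def AttTo (G : SimpleGraph V) (t : Finset V) (a : V) : Prop :=
  ∃ c ∈ t, G.Adj a c

lemma Rrel.of_att [Fintype V] {G : SimpleGraph V} {t t' : Finset V}
    (ht : IsTubeOn G Finset.univ t) (hdt : ∀ {x}, x ∈ t' → x ∉ t) {a b : V}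
    (ha : a ∈ t') (hb : b ∈ t')
    (hatta : AttTo G t a) (hattb : AttTo G t b) : Rrel G t t' a b := by
  by_cases hab : a = b
  · subst hab; exact Rrel.refl ha
  · obtain ⟨c, hc, hac⟩ := hatta
    obtain ⟨d, hd, hbd⟩ := hattb
    exact Rrel.of_adj ha hb
      ⟨hab, hdt ha, hdt hb, Or.inr (att_conn G t ht.2.2.2 hc hd hac hbd)⟩

/-- Key walk induction: walks in `G` on `t' ∪ t` translate to reachability
in the reconnected complement. -/
lemma key_walk [Fintype V] (G : SimpleGraph V) (t t' : Finset V)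
    (ht : IsTubeOn G Finset.univ t) (hdt : ∀ {x}, x ∈ t' → x ∉ t) :
    ∀ {u v : ↥((t' : Set V) ∪ (t : Set V))}
      (_ : (G.induce ((t' : Set V) ∪ (t : Set V))).Walk u v),
      (u.val ∈ t' → v.val ∈ t' → Rrel G t t' u.val v.val) ∧
      (u.val ∈ t' → v.val ∈ t →
        ∃ z, z ∈ t' ∧ Rrel G t t' u.val z ∧ AttTo G t z) ∧
      (u.val ∈ t → v.val ∈ t' →
        ∃ z, z ∈ t' ∧ Rrel G t t' v.val z ∧ AttTo G t z) := by
  intro u v w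
  induction w with
  | nil =>
    refine ⟨fun h _ => Rrel.refl h, fun h1 h2 => absurd h2 (hdt h1),
      fun h1 h2 => absurd h1 (hdt h2)⟩
  | @cons p x q h w ih =>
    have hadj : G.Adj p.val x.val := h
    have hxmem : x.val ∈ t' ∨ x.val ∈ t := by
      have := x.prop; simpa only [Set.mem_union, Finset.mem_coe] using this
    have hpmem : p.val ∈ t' ∨ p.val ∈ t := by
      have := p.prop; simpa only [Set.mem_union, Finset.mem_coe] using this
    rcases hpmem with hp | hp
    · rcases hxmem with hx | hx
      · -- p ∈ t', x ∈ t' : a G-edge inside t', hence a recon edge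
        have hpx : Rrel G t t' p.val x.val :=
          Rrel.of_adj hp hx
            ⟨hadj.ne, hdt hp, hdt hx,
              Or.inl (G.induce_pair_connected_of_adj hadj)⟩
        refine ⟨fun _ hq => hpx.trans (ih.1 hx hq), fun _ hq => ?_,
          fun h1 _ => absurd h1 (hdt hp)⟩
        obtain ⟨z, hz, hrz, hatt⟩ := ih.2.1 hx hq
        exact ⟨z, hz, hpx.trans hrz, hatt⟩
      · -- p ∈ t', x ∈ t : p is attached to t
        have hattp : AttTo G t p.val := ⟨x.val, hx, hadj⟩
        refine ⟨fun _ hq => ?_, fun _ _ => ⟨p.val, hp, Rrel.refl hp, hattp⟩,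
          fun h1 _ => absurd h1 (hdt hp)⟩
        obtain ⟨z, hz, hrz, hatt⟩ := ih.2.2 hx hq
        exact (Rrel.of_att ht hdt hp hz hattp hatt).trans hrz.symm
    · rcases hxmem with hx | hx
      · -- p ∈ t, x ∈ t' : x is attached to t
        have hattx : AttTo G t x.val := ⟨p.val, hp, hadj.symm⟩
        refine ⟨fun h1 _ => absurd h1 (fun h1 => hdt h1 hp), fun h1 _ => absurd h1 (fun h1 => hdt h1 hp),
          fun _ hq => ⟨x.val, hx, (ih.1 hx hq).symm, hattx⟩⟩
      · -- p ∈ t, x ∈ t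
        refine ⟨fun h1 _ => absurd h1 (fun h1 => hdt h1 hp), fun h1 _ => absurd h1 (fun h1 => hdt h1 hp),
          fun _ hq => ih.2.2 hx hq⟩

end helpers

open SimpleGraph

/-- For a tube `t` of `G` and a nonempty set `t'` of vertices disjoint from `t`:
`t'` is connected in the reconnected complement iff `t'` or `t' ∪ t` is
connected in `G`. -/
theorem stmt2 [DecidableEq V] [Fintype V] (G : SimpleGraph V) (t t' : Finset V)
    (ht : IsTubeOn G Finset.univ t) (hdisj : t' ⊆ tᶜ) (hne : t'.Nonempty) :
    ((recon G t).induce (t' : Set V)).Connected ↔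
      (G.induce (t' : Set V)).Connected ∨
        (G.induce ((t' ∪ t : Finset V) : Set V)).Connected := by
  have hdt : ∀ {x}, x ∈ t' → x ∉ t := fun hx => by
    simpa [Finset.mem_compl] using hdisj hx
  rw [show ((t' ∪ t : Finset V) : Set V) = (t' : Set V) ∪ (t : Set V) from Finset.coe_union t' t]
  constructor
  · -- forward direction
    intro hrc
    by_cases hGc : (G.induce (t' : Set V)).Connected
    · exact Or.inl hGc
    · right
      obtain ⟨u0, hu0⟩ := ht.2.1
      apply G.induce_connected_of_patches u0 (Or.inr (by simpa using hu0))
      intro v hv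
      rcases hv with hv' | hvt
      swap
      · -- v ∈ t : connect inside t
        exact ⟨(t : Set V), Set.subset_union_right, by simpa using hu0, hvt,
          (ht.2.2.2).preconnected _ _⟩
      · -- v ∈ t'
        set C : Set ↥(t' : Set V) :=
          {x | (G.induce (t' : Set V)).Reachable ⟨v, hv'⟩ x} with hC
        by_cases hall : ∀ x, x ∈ C
        · haveI : Nonempty ↥(t' : Set V) := ⟨⟨v, hv'⟩⟩
          exact absurd ⟨fun x y => (hall x).symm.trans (hall y)⟩ hGc
        · push_neg at hall
          obtain ⟨w0, hw0⟩ := hall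
          obtain ⟨wk⟩ := hrc.preconnected ⟨v, hv'⟩ w0
          obtain ⟨a, b, haC, hbC, hab⟩ :=
            escape_edge C wk (Reachable.refl _) hw0
          have hab' : (recon G t).Adj a.val b.val := hab
          obtain ⟨hne', -, -, hor⟩ := hab'
          rcases hor with hp | hcu
          · -- pair case impossible: b would be reachable from v in t'
            have hGab : G.Adj a.val b.val := adj_of_pair_conn G hne' hp
            have : b ∈ C := haC.trans (Adj.reachable (by exact hGab))
            exact absurd this hbC
          · -- union case: a is reachable from v in t', and a attaches to t
            obtain ⟨W⟩ := haC
            let W' : G.Walk v a.val :=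
              W.map (SimpleGraph.Embedding.induce (t' : Set V)).toHom
            have hs1 : (G.induce {x | x ∈ W'.support}).Connected :=
              W'.connected_induce_support
            have hs1sub : {x | x ∈ W'.support} ⊆ (t' : Set V) := by
              intro x hx
              have hx2 : x ∈ (W.map (SimpleGraph.Embedding.induce (t' : Set V)).toHom).support := hx
              rw [Walk.support_map, List.mem_map] at hx2
              obtain ⟨y, -, rfl⟩ := hx2
              exact y.prop
            have hconn : (G.induce ({x | x ∈ W'.support} ∪
                (({a.val, b.val} : Set V) ∪ (t : Set V)))).Connected := by
              refine induce_union_connected hs1.preconnected hcu.preconnected ⟨a.val, ?_, Or.inl (by simp)⟩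
              exact Walk.end_mem_support W'
            refine ⟨_, ?_, Or.inr (Or.inr (by simpa using hu0)),
              Or.inl (Walk.start_mem_support W'), hconn.preconnected _ _⟩
            refine Set.union_subset (hs1sub.trans Set.subset_union_left) ?_
            refine Set.union_subset ?_ Set.subset_union_right
            intro x hx
            rcases hx with rfl | rfl
            · exact Or.inl a.prop
            · exact Or.inl b.prop
  · -- backward direction
    rintro (hGc | hGu)
    · -- t' connected in G
      refine hGc.mono fun x y hxy => ?_
      have hxy' : G.Adj x.val y.val := hxy
      show (recon G t).Adj x.val y.val
      exact ⟨hxy'.ne, hdt (Finset.mem_coe.mp x.prop), hdt (Finset.mem_coe.mp y.prop),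
        Or.inl (G.induce_pair_connected_of_adj hxy')⟩
    · -- t' ∪ t connected in G
      obtain ⟨v0, hv0⟩ := hne
      haveI : Nonempty ↥(t' : Set V) := ⟨⟨v0, Finset.mem_coe.mpr hv0⟩⟩
      refine ⟨?_⟩
      rintro ⟨x, hx⟩ ⟨y, hy⟩
      have hx' : x ∈ (t' : Set V) ∪ (t : Set V) := Or.inl hx
      have hy' : y ∈ (t' : Set V) ∪ (t : Set V) := Or.inl hy
      obtain ⟨w⟩ := hGu.preconnected ⟨x, hx'⟩ ⟨y, hy'⟩
      obtain ⟨hx2, hy2, hr⟩ :=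
        (key_walk G t t' ht hdt w).1 (by simpa using hx) (by simpa using hy)
      exact hr
end

section
/- Let t be a tube of Γ and let t' be a tube of Γ strictly containing t. Then t' − t is a tube of the reconnected complement Γ*_t (its induced subgraph in Γ*_t is connected and it is a proper nonempty subset of V − t). -/
open Finset

variable {V : Type*}

/-- singleton induce connected -/
lemma induce_singleton_connected' (G : SimpleGraph V) (a : V) :
    (G.induce ({a} : Set V)).Connected := by
  have : Nonempty ({a} : Set V) := ⟨⟨a, rfl⟩⟩
  constructor
  rintro ⟨u, hu⟩ ⟨v, hv⟩
  simp only [Set.mem_singleton_iff] at hu hv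
  subst hu; subst hv
  rfl

lemma conn_pair_union (G : SimpleGraph V) {t : Set V} (htc : (G.induce t).Connected)
    {a d x y : V} (hx : x ∈ t) (hy : y ∈ t) (hax : G.Adj a x) (hyd : G.Adj y d) :
    (G.induce (({a, d} : Set V) ∪ t)).Connected := by
  have h1 : (G.induce (({a} : Set V) ∪ t)).Connected :=
    SimpleGraph.connected_induce_union (induce_singleton_connected' G a).preconnected htc.preconnected rfl hx hax
  have h2 : (G.induce ((({a} : Set V) ∪ t) ∪ {d})).Connected :=
    SimpleGraph.connected_induce_union h1.preconnected (induce_singleton_connected' G d).preconnected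
      (Or.inr hy) rfl hyd
  have : (({a} : Set V) ∪ t) ∪ {d} = ({a, d} : Set V) ∪ t := by
    ext z; simp; tauto
  rwa [this] at h2


/-- Exit lemma: a walk in `induce t'` from a vertex in `t` to a vertex not in `t`
passes a first vertex outside `t`, adjacent to some vertex of `t`. -/
lemma exit_lemma [DecidableEq V] (G : SimpleGraph V) (t t' : Finset V) :
    ∀ {u v : ((t' : Set V) : Type _)} (w : (G.induce (t' : Set V)).Walk u v),
      (u : V) ∈ t → (v : V) ∉ t →
      ∃ d : ((t' : Set V) : Type _), (d : V) ∉ t ∧ (∃ x ∈ t, G.Adj x d) ∧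
        ∃ w' : (G.induce (t' : Set V)).Walk d v, w'.length ≤ w.length := by
  intro u v w
  induction w with
  | nil => intro hu hv; exact absurd hu hv
  | cons h w ih =>
    rename_i a e c
    intro hu hv
    by_cases he : (e : V) ∈ t
    · obtain ⟨d, hd, hx, w', hw'⟩ := ih he hv
      exact ⟨d, hd, hx, w', hw'.trans (Nat.le_succ _)⟩
    · exact ⟨e, he, ⟨a, hu, h⟩, w, Nat.le_succ _⟩

lemma mem_sdiff_coe [DecidableEq V] {t t' : Finset V} {x : V}
    (hx : x ∈ (t' : Set V)) (hxt : x ∉ t) : x ∈ ((t' \ t : Finset V) : Set V) := by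
  simp only [Finset.coe_sdiff, Set.mem_diff, Finset.mem_coe]
  exact ⟨hx, hxt⟩

lemma main_reach [DecidableEq V] (G : SimpleGraph V) (t t' : Finset V)
    (htc : (G.induce (t : Set V)).Connected) :
    ∀ (n : ℕ) (u v : ((t' : Set V) : Type _))
      (w : (G.induce (t' : Set V)).Walk u v), w.length ≤ n →
      ∀ (hu : (u : V) ∉ t) (hv : (v : V) ∉ t),
      ((recon G t).induce ((t' \ t : Finset V) : Set V)).Reachable
        ⟨u, mem_sdiff_coe u.2 hu⟩ ⟨v, mem_sdiff_coe v.2 hv⟩ := by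
  intro n
  induction n with
  | zero =>
    intro u v w hw hu hv
    have := SimpleGraph.Walk.eq_of_length_eq_zero (Nat.le_zero.mp hw)
    subst this
    rfl
  | succ n ih =>
    intro u v w hw hu hv
    cases w with
    | nil => rfl
    | cons h w =>
      rename_i c
      by_cases hc : (c : V) ∈ t
      · -- exit lemma
        obtain ⟨d, hd, ⟨x, hxt, hxd⟩, w', hw'⟩ := exit_lemma G t t' w hc hv
        have hlen : w'.length ≤ n := by
          simp only [SimpleGraph.Walk.length_cons] at hw
          omega
        have tail := ih d v w' hlen hd hv
        by_cases had : (u : V) = (d : V)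
        · have : u = d := Subtype.ext had
          subst this
          exact tail
        · have hadj : (recon G t).Adj u d := by
            refine ⟨had, hu, hd, Or.inr ?_⟩
            exact conn_pair_union G htc hc hxt h hxd
          have step : ((recon G t).induce ((t' \ t : Finset V) : Set V)).Adj
              ⟨u, mem_sdiff_coe u.2 hu⟩ ⟨d, mem_sdiff_coe d.2 hd⟩ := hadj
          exact (step.toWalk.reachable).trans tail
      · have hlen : w.length ≤ n := by
          simp only [SimpleGraph.Walk.length_cons] at hw
          omega
        have tail := ih c v w hlen hc hv
        have hadj : (recon G t).Adj u c := by
          refine ⟨fun heq => (h : G.Adj (u:V) c).ne (Subtype.ext heq), hu, hc, Or.inl ?_⟩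
          exact SimpleGraph.induce_pair_connected_of_adj h
        have step : ((recon G t).induce ((t' \ t : Finset V) : Set V)).Adj
            ⟨u, mem_sdiff_coe u.2 hu⟩ ⟨c, mem_sdiff_coe c.2 hc⟩ := hadj
        exact (step.toWalk.reachable).trans tail

/-- If `t ⊊ t'` are tubes of `Γ`, then `t' − t` is a tube of the reconnected
complement `Γ*_t`. -/
theorem stmt19 [DecidableEq V] [Fintype V] (G : SimpleGraph V) (t t' : Finset V)
    (ht : IsTubeOn G Finset.univ t) (ht' : IsTubeOn G Finset.univ t')
    (hss : t ⊂ t') :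
    IsTubeOn (recon G t) tᶜ (t' \ t) := by
  obtain ⟨-, -, ht'ne, ht'c⟩ := ht'
  obtain ⟨-, -, -, htc⟩ := ht
  refine ⟨?_, ?_, ?_, ?_⟩
  · intro x hx
    simp only [Finset.mem_sdiff] at hx
    simpa using hx.2
  · obtain ⟨x, hx', hxt⟩ := Finset.exists_of_ssubset hss
    exact ⟨x, Finset.mem_sdiff.mpr ⟨hx', hxt⟩⟩
  · intro h
    apply ht'ne
    apply Finset.eq_univ_of_forall
    intro x
    by_cases hxt : x ∈ t
    · exact hss.subset hxt
    · have : x ∈ t' \ t := by rw [h]; simpa using hxt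
      exact (Finset.mem_sdiff.mp this).1
  · obtain ⟨x, hx', hxt⟩ := Finset.exists_of_ssubset hss
    have : Nonempty (((t' \ t : Finset V) : Set V) : Type _) :=
      ⟨⟨x, mem_sdiff_coe (by simpa using hx') hxt⟩⟩
    constructor
    rintro ⟨a, ha⟩ ⟨b, hb⟩
    simp only [Finset.coe_sdiff, Set.mem_diff, Finset.mem_coe] at ha hb
    obtain ⟨w⟩ := ht'c.preconnected ⟨a, ha.1⟩ ⟨b, hb.1⟩
    exact main_reach G t t' htc w.length ⟨a, ha.1⟩ ⟨b, hb.1⟩ w le_rfl ha.2 hb.2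
end
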